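/- arXiv:2105.14604 — 4 statements merged into one kernel-verified Lean document; each statement's English description precedes it below -/
import Mathlib

section
/- The duality D is a homeomorphism of the topological space Hom(ℕ,ℕ̂): D is a bijection, and both D and its inverse (which is D itself) are continuous with respect to the interval topology. -/
/-!
Encoding conventions (used throughout):
* The paper's positive integers `ℕ = {1,2,…}` are encoded by Lean's `ℕ = {0,1,2,…}`
  via the order isomorphism `n ↦ n - 1`, in both the domain and the finite part of
  the codomain `ℕ̂ = ℕ ∪ {∞}`, the latter encoded as `ℕ∞`.  Under this shift the
  duality `D` is given by the same formula `Df(p) = min { q | f(q) > p }`.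
* Variables `x_1, x_2, …` are indexed by Lean's `0, 1, 2, …`; monomials are
  finitely supported functions `ℕ → ℕ` (exponent vectors); exponents are unshifted.
-/

noncomputable section

/-- Maps `ℕ → ℕ̂`. -/
abbrev NNhat := ℕ → ℕ∞

/-- SmallMap maps: all values bounded by some natural number. -/
def SmallMap (f : NNhat) : Prop := ∃ N : ℕ, ∀ n, f n ≤ (N : ℕ∞)

/-- LargeMap maps: some value equals `∞`. -/
def LargeMap (f : NNhat) : Prop := ∃ n, f n = ⊤

/-- Maps with all values finite and unbounded image. -/
def UnbFinMap (f : NNhat) : Prop := (∀ n, f n ≠ ⊤) ∧ ∀ N : ℕ, ∃ n, (N : ℕ∞) < f n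

/-- The duality `D`: `Df(p) = min { q : f(q) > p }`, the min of the empty set being `∞`. -/
def Ddual (f : NNhat) : NNhat := fun p =>
  sInf ((fun q : ℕ => (q : ℕ∞)) '' {q : ℕ | (p : ℕ∞) < f q})

/-- The poset `Hom(ℕ, ℕ̂)` of monotone maps, ordered pointwise. -/
abbrev HomNN := {f : NNhat // Monotone f}

/-- The topology on `Hom(ℕ, ℕ̂)` with basis the intervals `U(f̲, f̄)` with `f̲` small
and `f̄` large. -/
instance (priority := 10000) : TopologicalSpace HomNN :=
  TopologicalSpace.generateFrom
    {S | ∃ a b : HomNN, SmallMap a.1 ∧ LargeMap b.1 ∧ S = {f : HomNN | a ≤ f ∧ f ≤ b}}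

/-- Monomials: finitely supported functions `ℕ → ℕ` (exponent vectors). -/
def Mon : Set (ℕ → ℕ) := {u | (Function.support u).Finite}

/-- `Γ f = ∏_{f(i) < ∞} x_{f(i)}` : the exponent of `x_j` is `#{i | f(i) = j}`. -/
def Gmap (f : NNhat) : ℕ → ℕ := fun j => Nat.card {i : ℕ // f i = (j : ℕ∞)}

/-- `Λ f = ∏_{i ≥ 1} x_i^{f(i) - f(i-1)}` (with the convention `f(0) = 1`, i.e. the
shifted convention `f(-1) = 0`). -/
def Lmap (f : NNhat) : ℕ → ℕ := fun i =>
  match i with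
  | 0 => (f 0).toNat
  | k + 1 => (f (k + 1)).toNat - (f k).toNat

/-- The exponent vector of the variable `x_i`. -/
def xvar (i : ℕ) : ℕ → ℕ := fun k => if k = i then 1 else 0

/-- One generating step of the strongly stable order: `stStep a b` means `a ≥_st b`
by one of the defining relations `x_i·w ≥_st x_j·w` (`i ≤ j`) or `x_i·b ≥_st b`. -/
def stStep (a b : ℕ → ℕ) : Prop :=
  (∃ i j w, i ≤ j ∧ a = w + xvar i ∧ b = w + xvar j) ∨ (∃ i, a = b + xvar i)

/-- The strongly stable order: `stGE u v` means `u ≥_st v`. -/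
def stGE (u v : ℕ → ℕ) : Prop := Relation.ReflTransGen stStep u v

/-- A strongly stable ideal: a set of monomials upward closed under `≥_st`. -/
def IsSStableIdeal (I : Set (ℕ → ℕ)) : Prop :=
  I ⊆ Mon ∧ ∀ u ∈ I, ∀ v, stGE v u → v ∈ I

/-- The smallest strongly stable ideal containing the set `G` of monomials. -/
def sstSpan (G : Set (ℕ → ℕ)) : Set (ℕ → ℕ) := {v | ∃ u ∈ G, stGE v u}

/-- `Γ(ℐ^L)`: the set of monomials `Γ f` for `f` large in `ℐ`. -/
def GammaIdeal (ℐ : Set HomNN) : Set (ℕ → ℕ) :=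
  {u | ∃ f ∈ ℐ, LargeMap f.1 ∧ u = Gmap f.1}

/-- `Λ(ℱ_S)`: the set of monomials `Λ f` for `f` small in `ℱ`. -/
def LambdaIdeal (ℱ : Set HomNN) : Set (ℕ → ℕ) :=
  {u | ∃ f ∈ ℱ, SmallMap f.1 ∧ u = Lmap f.1}

/-- `I` is a dualizable strongly stable ideal with dual strongly stable ideal `J`:
the open poset ideal `ℐ` corresponding to `I` is regular open, and `J` is obtained
from the interior `ℱ` of the complement of `ℐ` as `Λ(ℱ_S)`. -/
def IsDualPair (I J : Set (ℕ → ℕ)) : Prop :=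
  ∃ ℐ : Set HomNN, IsOpen ℐ ∧ IsLowerSet ℐ ∧ ℐ = interior (closure ℐ) ∧
    GammaIdeal ℐ = I ∧ LambdaIdeal (interior ℐᶜ) = J

/-- Strict lexicographic order `f ≻_lex g`: at the least index where they differ,
`f` is larger. -/
def lexGT (f g : NNhat) : Prop := ∃ r, (∀ i < r, f i = g i) ∧ g r < f r

/-- `f ⪰_lex g`. -/
def lexGE (f g : NNhat) : Prop := f = g ∨ lexGT f g

/-- The single monomial `x_{i+1}^e` (Lean variable index `i`). -/
def singleMon (i e : ℕ) : ℕ → ℕ := fun j => if j = i then e else 0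

end

noncomputable section

lemma sInf_coe_le_iff (S : Set ℕ) (q : ℕ) :
    sInf ((fun q : ℕ => (q : ℕ∞)) '' S) ≤ (q : ℕ∞) ↔ ∃ m ∈ S, m ≤ q := by
  constructor
  · intro h
    by_contra hc
    push_neg at hc
    have h1 : ((q : ℕ∞) + 1) ≤ sInf ((fun q : ℕ => (q : ℕ∞)) '' S) := by
      apply le_sInf
      rintro x ⟨m, hm, rfl⟩
      have : q + 1 ≤ m := hc m hm
      show ((q : ℕ∞) + 1) ≤ (m : ℕ∞)
      exact_mod_cast this
    have h2 : ((q : ℕ∞) + 1) ≤ (q : ℕ∞) := h1.trans h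
    have h3 : (q : ℕ∞) < (q : ℕ∞) + 1 := by
      have : (q : ℕ∞) < ((q + 1 : ℕ) : ℕ∞) := by exact_mod_cast Nat.lt_succ_self q
      simpa using this
    exact absurd h2 (not_le.mpr h3)
  · rintro ⟨m, hm, hmq⟩
    exact le_trans (sInf_le ⟨m, hm, rfl⟩) (show (m : ℕ∞) ≤ (q : ℕ∞) by exact_mod_cast hmq)

lemma ddual_le_iff {f : NNhat} (hf : Monotone f) (p q : ℕ) :
    Ddual f p ≤ (q : ℕ∞) ↔ (p : ℕ∞) < f q := by
  rw [Ddual, sInf_coe_le_iff]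
  constructor
  · rintro ⟨m, hm, hmq⟩
    exact lt_of_lt_of_le hm (hf hmq)
  · intro h
    exact ⟨q, h, le_rfl⟩

lemma ddual_mono (f : NNhat) : Monotone (Ddual f) := by
  intro p p' hpp'
  apply sInf_le_sInf
  apply Set.image_mono
  intro q hq
  exact lt_of_le_of_lt (show (p : ℕ∞) ≤ (p' : ℕ∞) by exact_mod_cast hpp') hq

lemma ddual_anti {f g : NNhat} (h : f ≤ g) : Ddual g ≤ Ddual f := by
  intro p
  apply sInf_le_sInf
  apply Set.image_mono
  intro q hq
  exact lt_of_lt_of_le hq (h q)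

lemma ddual_ddual {f : NNhat} (hf : Monotone f) : Ddual (Ddual f) = f := by
  funext q
  have hset : {p : ℕ | (q : ℕ∞) < Ddual f p} = {p : ℕ | f q ≤ (p : ℕ∞)} := by
    ext p
    simp only [Set.mem_setOf_eq, lt_iff_not_ge, ddual_le_iff hf, not_lt, not_not]
  show sInf ((fun p : ℕ => (p : ℕ∞)) '' {p : ℕ | (q : ℕ∞) < Ddual f p}) = f q
  rw [hset]
  cases hfq : f q with
  | top =>
    have he : {p : ℕ | (⊤ : ℕ∞) ≤ (p : ℕ∞)} = ∅ := by
      ext p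
      simp [(ENat.coe_lt_top p).ne']
    rw [he, Set.image_empty, sInf_empty]
  | coe m =>
    apply le_antisymm
    · apply sInf_le
      exact ⟨m, Set.mem_setOf_eq ▸ le_rfl, rfl⟩
    · apply le_sInf
      rintro x ⟨p, hp, rfl⟩
      exact hp

lemma large_ddual_of_small {f : NNhat} (h : SmallMap f) : LargeMap (Ddual f) := by
  obtain ⟨N, hN⟩ := h
  refine ⟨N, ?_⟩
  have : {q : ℕ | (N : ℕ∞) < f q} = ∅ := by
    ext q
    simp [not_lt.mpr (hN q)]
  show sInf ((fun q : ℕ => (q : ℕ∞)) '' {q : ℕ | (N : ℕ∞) < f q}) = ⊤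
  rw [this, Set.image_empty, sInf_empty]

lemma small_ddual_of_large {f : NNhat} (h : LargeMap f) : SmallMap (Ddual f) := by
  obtain ⟨n, hn⟩ := h
  refine ⟨n, fun p => ?_⟩
  apply sInf_le
  exact ⟨n, by simp [hn], rfl⟩

/-- The duality as an equivalence on `HomNN`. -/
def Dequiv : HomNN ≃ HomNN where
  toFun f := ⟨Ddual f.1, ddual_mono f.1⟩
  invFun f := ⟨Ddual f.1, ddual_mono f.1⟩
  left_inv f := Subtype.ext (ddual_ddual f.2)
  right_inv f := Subtype.ext (ddual_ddual f.2)

lemma dequiv_galois₁ {a f : HomNN} : a ≤ Dequiv f ↔ f ≤ Dequiv a := by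
  constructor
  · intro h
    have h2 : Ddual (Ddual f.1) ≤ Ddual a.1 := ddual_anti h
    rw [ddual_ddual f.2] at h2
    exact h2
  · intro h
    have h2 : Ddual (Ddual a.1) ≤ Ddual f.1 := ddual_anti h
    rw [ddual_ddual a.2] at h2
    exact h2

lemma dequiv_galois₂ {f b : HomNN} : Dequiv f ≤ b ↔ Dequiv b ≤ f := by
  constructor
  · intro h
    have h2 : Ddual b.1 ≤ Ddual (Ddual f.1) := ddual_anti h
    rw [ddual_ddual f.2] at h2
    exact h2
  · intro h
    have h2 : Ddual f.1 ≤ Ddual (Ddual b.1) := ddual_anti h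
    rw [ddual_ddual b.2] at h2
    exact h2

lemma dequiv_continuous : Continuous (Dequiv : HomNN → HomNN) := by
  apply continuous_generateFrom_iff.mpr
  rintro s ⟨a, b, ha, hb, rfl⟩
  have hpre : (Dequiv : HomNN → HomNN) ⁻¹' {f : HomNN | a ≤ f ∧ f ≤ b}
      = {f : HomNN | Dequiv b ≤ f ∧ f ≤ Dequiv a} := by
    ext f
    simp only [Set.mem_preimage, Set.mem_setOf_eq]
    constructor
    · rintro ⟨h1, h2⟩
      exact ⟨dequiv_galois₂.mp h2, dequiv_galois₁.mp h1⟩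
    · rintro ⟨h1, h2⟩
      exact ⟨dequiv_galois₁.mpr h2, dequiv_galois₂.mpr h1⟩
  rw [hpre]
  exact TopologicalSpace.isOpen_generateFrom_of_mem
    ⟨Dequiv b, Dequiv a, small_ddual_of_large hb, large_ddual_of_small ha, rfl⟩

/-- `D` is a homeomorphism of `Hom(ℕ,ℕ̂)` with the interval topology:
there is a homeomorphism whose underlying map is `D`, and whose inverse is `D` itself. -/
theorem stmt2 :
    ∃ h : HomNN ≃ₜ HomNN,
      (∀ f : HomNN, (h f).1 = Ddual f.1) ∧
      (∀ f : HomNN, (h.symm f).1 = Ddual f.1) := by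
  refine ⟨⟨Dequiv, dequiv_continuous, dequiv_continuous⟩, fun f => rfl, fun f => rfl⟩

end
end

section
/- The order relations correspond under Γ and Λ as follows: for large maps f, g ∈ Hom^L(ℕ,ℕ̂) one has f ≤ g if and only if Γf ≥_st Γg, and for small maps f, g ∈ Hom_S(ℕ,ℕ̂) one has f ≤ g if and only if Λf ≤_st Λg. -/
noncomputable section

def psum (u : ℕ → ℕ) (m : ℕ) : ℕ := ∑ j ∈ Finset.range (m+1), u j

lemma psum_xvar (i m : ℕ) : psum (xvar i) m = if i ≤ m then 1 else 0 := by
  unfold psum xvar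
  rw [Finset.sum_ite_eq' (Finset.range (m+1)) i (fun _ => 1)]
  simp [Nat.lt_succ_iff]

lemma psum_add (u w : ℕ → ℕ) (m : ℕ) : psum (u + w) m = psum u m + psum w m := by
  unfold psum; simp [Finset.sum_add_distrib]

lemma psum_le_of_step {a b : ℕ → ℕ} (h : stStep a b) (m : ℕ) : psum b m ≤ psum a m := by
  rcases h with ⟨i, j, w, hij, ha, hb⟩ | ⟨i, ha⟩
  · subst ha; subst hb
    rw [psum_add, psum_add, psum_xvar, psum_xvar]
    by_cases hj : j ≤ m
    · simp [hj, le_trans hij hj]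
    · simp only [hj, if_false]; split <;> omega
  · subst ha; rw [psum_add]; omega

lemma psum_le_of_stGE {u v : ℕ → ℕ} (h : stGE u v) (m : ℕ) : psum v m ≤ psum u m := by
  induction h with
  | refl => exact le_refl _
  | tail _ step ih => exact le_trans (psum_le_of_step step m) ih

/-- Extend a sum over `range B` beyond the support. -/
lemma sum_range_ext {u : ℕ → ℕ} {B n : ℕ} (hu : ∀ k, B ≤ k → u k = 0) (h : B ≤ n) :
    ∑ j ∈ Finset.range n, u j = ∑ j ∈ Finset.range B, u j := by
  rw [← Finset.sum_subset (Finset.range_subset_range.2 h)]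
  intro x _ hx
  exact hu x (by simpa using hx)

lemma psum_eq_total {u : ℕ → ℕ} {B : ℕ} (hu : ∀ k, B ≤ k → u k = 0) {i m : ℕ}
    (hsupp : ∀ k, u k ≠ 0 → k ≤ i) (him : i ≤ m) :
    psum u m = ∑ j ∈ Finset.range B, u j := by
  have h1 : ∑ j ∈ Finset.range (max (m+1) B), u j = ∑ j ∈ Finset.range (m+1), u j := by
    apply sum_range_ext _ (le_max_left _ _)
    intro k hk
    by_contra hne
    exact absurd (le_trans (hsupp k hne) him) (by omega)
  have h2 : ∑ j ∈ Finset.range (max (m+1) B), u j = ∑ j ∈ Finset.range B, u j :=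
    sum_range_ext hu (le_max_right _ _)
  unfold psum; omega

lemma psum_le_total {u : ℕ → ℕ} {B : ℕ} (hu : ∀ k, B ≤ k → u k = 0) (m : ℕ) :
    psum u m ≤ ∑ j ∈ Finset.range B, u j := by
  have h2 : ∑ j ∈ Finset.range (max (m+1) B), u j = ∑ j ∈ Finset.range B, u j :=
    sum_range_ext hu (le_max_right _ _)
  have h1 : psum u m ≤ ∑ j ∈ Finset.range (max (m+1) B), u j := by
    unfold psum
    exact Finset.sum_le_sum_of_subset (Finset.range_subset_range.2 (le_max_left _ _))
  omega

/-- Double counting: `∑_{m<B} psum u m = ∑_{j<B} (B-j)·u j`. -/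
lemma sum_psum_eq {u : ℕ → ℕ} {B : ℕ} :
    ∑ m ∈ Finset.range B, psum u m = ∑ j ∈ Finset.range B, (B - j) * u j := by
  have key : ∀ m ∈ Finset.range B, psum u m
      = ∑ j ∈ Finset.range B, (if j ≤ m then u j else 0) := by
    intro m hm
    rw [Finset.mem_range] at hm
    rw [Finset.sum_ite, Finset.sum_const_zero, add_zero]
    apply Finset.sum_congr _ (fun _ _ => rfl)
    ext j
    simp [Nat.lt_succ_iff]
    omega
  rw [Finset.sum_congr rfl key, Finset.sum_comm]
  apply Finset.sum_congr rfl
  intro j hj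
  rw [Finset.mem_range] at hj
  rw [Finset.sum_ite, Finset.sum_const_zero, add_zero, Finset.sum_const, smul_eq_mul]
  have : (Finset.filter (fun m => j ≤ m) (Finset.range B)).card = B - j := by
    have : Finset.filter (fun m => j ≤ m) (Finset.range B) = Finset.Ico j B := by
      ext m; simp [Finset.mem_Ico]; omega
    rw [this, Nat.card_Ico]
  rw [this, mul_comm]

def Dominates (u v : ℕ → ℕ) : Prop := ∀ m, psum v m ≤ psum u m

/-- Under domination and equal degree, the weight of `u` is at most that of `v`. -/
lemma weight_le {u v : ℕ → ℕ} {B : ℕ} (hu : ∀ k, B ≤ k → u k = 0) (hv : ∀ k, B ≤ k → v k = 0)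
    (hdom : Dominates u v)
    (hdeg : ∑ j ∈ Finset.range B, u j = ∑ j ∈ Finset.range B, v j) :
    ∑ j ∈ Finset.range B, j * u j ≤ ∑ j ∈ Finset.range B, j * v j := by
  have hA : ∑ j ∈ Finset.range B, (B - j) * v j ≤ ∑ j ∈ Finset.range B, (B - j) * u j := by
    rw [← sum_psum_eq, ← sum_psum_eq]
    exact Finset.sum_le_sum (fun m _ => hdom m)
  have hsplit : ∀ w : ℕ → ℕ,
      ∑ j ∈ Finset.range B, (B - j) * w j + ∑ j ∈ Finset.range B, j * w j
        = B * ∑ j ∈ Finset.range B, w j := by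
    intro w
    rw [← Finset.sum_add_distrib, Finset.mul_sum]
    apply Finset.sum_congr rfl
    intro j hj
    rw [Finset.mem_range] at hj
    have : B - j + j = B := by omega
    rw [← add_mul, this]
  have h1 := hsplit u
  have h2 := hsplit v
  rw [hdeg] at h1
  omega

lemma psum_add_xvar (w : ℕ → ℕ) (i m : ℕ) :
    psum (w + xvar i) m = psum w m + (if i ≤ m then 1 else 0) := by
  rw [psum_add, psum_xvar]

lemma weight_add_xvar (w : ℕ → ℕ) {i B : ℕ} (hi : i < B) :
    ∑ j ∈ Finset.range B, j * (w + xvar i) j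
      = ∑ j ∈ Finset.range B, j * w j + i := by
  have : ∀ j, j * (w + xvar i) j = j * w j + j * xvar i j := by
    intro j; simp [mul_add]
  rw [Finset.sum_congr rfl (fun j _ => this j), Finset.sum_add_distrib]
  congr 1
  unfold xvar
  rw [Finset.sum_congr rfl (fun j _ => by rw [mul_ite, mul_one, mul_zero]),
    Finset.sum_ite_eq' (Finset.range B) i (fun j => j)]
  simp [hi]

lemma deg_add_xvar (w : ℕ → ℕ) {i B : ℕ} (hi : i < B) :
    ∑ j ∈ Finset.range B, (w + xvar i) j = ∑ j ∈ Finset.range B, w j + 1 := by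
  simp only [Pi.add_apply]
  rw [Finset.sum_add_distrib]
  congr 1
  unfold xvar
  rw [Finset.sum_ite_eq' (Finset.range B) i (fun _ => 1)]
  simp [hi]

/-- Step construction: if `u` dominates `v`, same degree, but `u ≠ v`, there is a
legal move `u → u'` staying above `v` and strictly increasing the weight. -/
lemma step_construct {u v : ℕ → ℕ} {B : ℕ} (hu : ∀ k, B ≤ k → u k = 0)
    (hv : ∀ k, B ≤ k → v k = 0) (hdom : Dominates u v)
    (hdeg : ∑ j ∈ Finset.range B, u j = ∑ j ∈ Finset.range B, v j)
    (hne : u ≠ v) :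
    ∃ u', stStep u u' ∧ (∀ k, B ≤ k → u' k = 0) ∧ Dominates u' v ∧
      (∑ j ∈ Finset.range B, u' j = ∑ j ∈ Finset.range B, v j) ∧
      (∑ j ∈ Finset.range B, j * u j + 1 ≤ ∑ j ∈ Finset.range B, j * u' j) := by
  have hex : ∃ k, u k ≠ v k := by
    by_contra h
    push_neg at h
    exact hne (funext h)
  set i := Nat.find hex with hi_def
  have hi : u i ≠ v i := Nat.find_spec hex
  have hpre : ∀ k, k < i → u k = v k := fun k hk => by
    have := Nat.find_min hex hk; simpa using this
  have hui : v i < u i := by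
    have h1 := hdom i
    unfold psum at h1
    rw [Finset.sum_range_succ, Finset.sum_range_succ] at h1
    have : ∑ k ∈ Finset.range i, v k = ∑ k ∈ Finset.range i, u k :=
      Finset.sum_congr rfl (fun k hk => (hpre k (Finset.mem_range.1 hk)).symm)
    omega
  have hexj : ∃ j, u j < v j := by
    by_contra h
    push_neg at h
    have hiB : i < B := by
      by_contra hiB; push_neg at hiB
      have := hu i hiB; have := hv i hiB; omega
    have : ∑ j ∈ Finset.range B, v j < ∑ j ∈ Finset.range B, u j :=
      Finset.sum_lt_sum (fun k _ => h k) ⟨i, Finset.mem_range.2 hiB, hui⟩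
    omega
  set j := Nat.find hexj with hj_def
  have hj : u j < v j := Nat.find_spec hexj
  have hjmin : ∀ k, k < j → v k ≤ u k := fun k hk => by
    have := Nat.find_min hexj hk; omega
  have hij : i < j := by
    rcases lt_trichotomy i j with h | h | h
    · exact h
    · rw [← h] at hj; omega
    · have := hpre j h; omega
  have hjB : j < B := by
    by_contra h; push_neg at h
    have := hu j h; have := hv j h; omega
  have hiB : i < B := lt_trans hij hjB
  set w : ℕ → ℕ := fun k => if k = i then u k - 1 else u k with hw_def
  have huw : u = w + xvar i := by
    funext k
    simp only [hw_def, xvar, Pi.add_apply]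
    by_cases hk : k = i
    · subst hk; simp; omega
    · simp [hk]
  set u' := w + xvar j with hu'_def
  have hpsum_u : ∀ m, psum u m = psum w m + (if i ≤ m then 1 else 0) := by
    intro m; rw [huw, psum_add_xvar]
  have hpsum_u' : ∀ m, psum u' m = psum w m + (if j ≤ m then 1 else 0) := by
    intro m; rw [hu'_def, psum_add_xvar]
  refine ⟨u', Or.inl ⟨i, j, w, le_of_lt hij, huw, rfl⟩, ?_, ?_, ?_, ?_⟩
  · intro k hk
    simp only [hu'_def, Pi.add_apply, hw_def, xvar]
    have hki : k ≠ i := by omega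
    have hkj : k ≠ j := by omega
    simp [hki, hkj, hu k hk]
  · intro m
    rcases lt_or_ge m i with hm | hm
    · have := hdom m
      rw [hpsum_u' m, hpsum_u m] at *
      have h1 : ¬ i ≤ m := by omega
      have h2 : ¬ j ≤ m := by omega
      simp only [h1, h2, if_false] at *
      omega
    · rcases lt_or_ge m j with hm2 | hm2
      · -- strict domination on [i, j)
        have hstrict : psum v m < psum u m := by
          unfold psum
          apply Finset.sum_lt_sum
          · intro k hk
            rw [Finset.mem_range] at hk
            rcases lt_trichotomy k i with h | h | h
            · exact le_of_eq (hpre k h).symm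
            · subst h; omega
            · exact hjmin k (by omega)
          · exact ⟨i, Finset.mem_range.2 (by omega), hui⟩
        rw [hpsum_u' m]
        rw [hpsum_u m] at hstrict
        have h1 : i ≤ m := hm
        have h2 : ¬ j ≤ m := by omega
        simp only [h1, h2, if_true, if_false] at *
        omega
      · have := hdom m
        rw [hpsum_u' m]
        rw [hpsum_u m] at this
        have h1 : i ≤ m := hm
        have h2 : j ≤ m := hm2
        simp only [h1, h2, if_true] at *
        omega
  · rw [hu'_def, deg_add_xvar w hjB, ← hdeg, huw, deg_add_xvar w hiB]
  · rw [hu'_def, weight_add_xvar w hjB]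
    conv_lhs => rw [huw, weight_add_xvar w hiB]
    omega

lemma chain_eq {B : ℕ} {v : ℕ → ℕ} (hv : ∀ k, B ≤ k → v k = 0) :
    ∀ N : ℕ, ∀ u : ℕ → ℕ, (∀ k, B ≤ k → u k = 0) → Dominates u v →
    (∑ j ∈ Finset.range B, u j = ∑ j ∈ Finset.range B, v j) →
    (∑ j ∈ Finset.range B, j * v j ≤ ∑ j ∈ Finset.range B, j * u j + N) →
    stGE u v := by
  intro N
  induction N with
  | zero =>
    intro u hu hdom hdeg hW
    by_cases hne : u = v
    · subst hne; exact Relation.ReflTransGen.refl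
    · exfalso
      obtain ⟨u', _, hu', hdom', hdeg', hW'⟩ := step_construct hu hv hdom hdeg hne
      have := weight_le hu' hv hdom' hdeg'
      omega
  | succ N ih =>
    intro u hu hdom hdeg hW
    by_cases hne : u = v
    · subst hne; exact Relation.ReflTransGen.refl
    · obtain ⟨u', hstep, hu', hdom', hdeg', hW'⟩ := step_construct hu hv hdom hdeg hne
      exact Relation.ReflTransGen.head hstep (ih u' hu' hdom' hdeg' (by omega))

lemma chain_gen {B : ℕ} {v : ℕ → ℕ} (hv : ∀ k, B ≤ k → v k = 0) :
    ∀ d : ℕ, ∀ u : ℕ → ℕ, (∀ k, B ≤ k → u k = 0) → Dominates u v →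
    (∑ j ∈ Finset.range B, u j = ∑ j ∈ Finset.range B, v j + d) →
    stGE u v := by
  intro d
  induction d with
  | zero =>
    intro u hu hdom hdeg
    exact chain_eq hv (∑ j ∈ Finset.range B, j * v j) u hu hdom (by omega) (by omega)
  | succ d ih =>
    intro u hu hdom hdeg
    have hne : ∃ k ∈ Finset.range B, u k ≠ 0 := by
      by_contra h
      push_neg at h
      have : ∑ j ∈ Finset.range B, u j = 0 :=
        Finset.sum_eq_zero (fun k hk => h k hk)
      omega
    set s := (Finset.range B).filter (fun k => u k ≠ 0) with hs_def
    have hsne : s.Nonempty := by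
      obtain ⟨k, hk1, hk2⟩ := hne
      exact ⟨k, Finset.mem_filter.2 ⟨hk1, hk2⟩⟩
    set i := s.max' hsne with hi_def
    have hiB : i < B := Finset.mem_range.1 (Finset.mem_filter.1 (s.max'_mem hsne)).1
    have hui : u i ≠ 0 := (Finset.mem_filter.1 (s.max'_mem hsne)).2
    have hsupp : ∀ k, u k ≠ 0 → k ≤ i := by
      intro k hk
      by_cases hkB : k < B
      · exact s.le_max' k (Finset.mem_filter.2 ⟨Finset.mem_range.2 hkB, hk⟩)
      · exact absurd (hu k (by omega)) hk
    set w : ℕ → ℕ := fun k => if k = i then u k - 1 else u k with hw_def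
    have huw : u = w + xvar i := by
      funext k
      simp only [hw_def, xvar, Pi.add_apply]
      by_cases hk : k = i
      · subst hk; simp; omega
      · simp [hk]
    have hw_bd : ∀ k, B ≤ k → w k = 0 := by
      intro k hk
      simp only [hw_def]
      have : k ≠ i := by omega
      simp [this, hu k hk]
    have hw_deg : ∑ j ∈ Finset.range B, u j = ∑ j ∈ Finset.range B, w j + 1 := by
      conv_lhs => rw [huw]
      rw [deg_add_xvar w hiB]
    have hw_dom : Dominates w v := by
      intro m
      rcases lt_or_ge m i with hm | hm
      · have := hdom m
        rw [huw, psum_add_xvar] at this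
        have h1 : ¬ i ≤ m := by omega
        simp only [h1, if_false, add_zero] at this
        exact this
      · have h1 : psum u m = ∑ j ∈ Finset.range B, u j := psum_eq_total hu hsupp hm
        have h2 : psum v m ≤ ∑ j ∈ Finset.range B, v j := psum_le_total hv m
        have h3 : psum u m = psum w m + 1 := by
          rw [huw, psum_add_xvar]; simp [hm]
        omega
    exact Relation.ReflTransGen.head (Or.inr ⟨i, huw⟩) (ih w hw_bd hw_dom (by omega))

/-- The completeness direction: domination of partial sums implies `stGE`. -/
lemma stGE_of_dominates {u v : ℕ → ℕ} {B : ℕ} (hu : ∀ k, B ≤ k → u k = 0)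
    (hv : ∀ k, B ≤ k → v k = 0) (hdom : Dominates u v) : stGE u v := by
  have hdeg : ∑ j ∈ Finset.range B, v j ≤ ∑ j ∈ Finset.range B, u j := by
    have h1 := hdom B
    have h2 : psum u B = ∑ j ∈ Finset.range B, u j := by
      unfold psum; exact sum_range_ext hu (by omega)
    have h3 : psum v B = ∑ j ∈ Finset.range B, v j := by
      unfold psum; exact sum_range_ext hv (by omega)
    omega
  exact chain_gen hv (∑ j ∈ Finset.range B, u j - ∑ j ∈ Finset.range B, v j)
    u hu hdom (by omega)


section Small
variable {f : NNhat}

lemma small_ne_top (hf : SmallMap f) (n : ℕ) : f n ≠ ⊤ := by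
  obtain ⟨N, hN⟩ := hf
  intro h
  have := hN n
  rw [h] at this
  exact absurd (top_le_iff.1 this).symm (by simp)

lemma small_coe_toNat (hf : SmallMap f) (n : ℕ) : ((f n).toNat : ℕ∞) = f n :=
  ENat.coe_toNat (small_ne_top hf n)

lemma toNat_mono (hf : SmallMap f) (hmono : Monotone f) :
    Monotone (fun n => (f n).toNat) := by
  intro a b hab
  have h := hmono hab
  rw [← small_coe_toNat hf a, ← small_coe_toNat hf b, Nat.cast_le] at h
  exact h

lemma psum_Lmap (hf : SmallMap f) (hmono : Monotone f) (m : ℕ) :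
    psum (Lmap f) m = (f m).toNat := by
  induction m with
  | zero => unfold psum; simp [Lmap]
  | succ m ih =>
    unfold psum at *
    rw [Finset.sum_range_succ, ih]
    show (f m).toNat + ((f (m+1)).toNat - (f m).toNat) = (f (m+1)).toNat
    have := toNat_mono hf hmono (Nat.le_succ m)
    simp at this
    omega

lemma Lmap_bound (hf : SmallMap f) (hmono : Monotone f) :
    ∃ B, ∀ k, B ≤ k → Lmap f k = 0 := by
  obtain ⟨N, hN⟩ := hf
  have hbd : ∀ n, (f n).toNat ≤ N := by
    intro n
    have := hN n
    rw [← small_coe_toNat ⟨N, hN⟩ n, Nat.cast_le] at this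
    exact this
  have hne : (Set.range fun n => (f n).toNat).Nonempty := ⟨(f 0).toNat, 0, rfl⟩
  have hbdd : BddAbove (Set.range fun n => (f n).toNat) := ⟨N, by rintro x ⟨n, rfl⟩; exact hbd n⟩
  obtain ⟨B, hB⟩ := Nat.sSup_mem hne hbdd
  simp only [] at hB
  refine ⟨B + 1, fun k hk => ?_⟩
  obtain ⟨k, rfl⟩ : ∃ m, k = m + 1 := ⟨k - 1, by omega⟩
  have h1 : (f (k)).toNat = (f B).toNat := by
    have hle := toNat_mono ⟨N, hN⟩ hmono (show B ≤ k by omega)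
    simp only [] at hle
    have hge : (f k).toNat ≤ sSup (Set.range fun n => (f n).toNat) :=
      le_csSup hbdd ⟨k, rfl⟩
    omega
  have h2 : (f (k+1)).toNat = (f B).toNat := by
    have hle := toNat_mono ⟨N, hN⟩ hmono (show B ≤ k + 1 by omega)
    simp only [] at hle
    have hge : (f (k+1)).toNat ≤ sSup (Set.range fun n => (f n).toNat) :=
      le_csSup hbdd ⟨k + 1, rfl⟩
    omega
  show (f (k+1)).toNat - (f k).toNat = 0
  omega

end Small

lemma small_part (f g : NNhat) (hf' : Monotone f) (hg' : Monotone g)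
    (hf : SmallMap f) (hg : SmallMap g) : f ≤ g ↔ stGE (Lmap g) (Lmap f) := by
  constructor
  · intro hle
    obtain ⟨Bf, hBf⟩ := Lmap_bound hf hf'
    obtain ⟨Bg, hBg⟩ := Lmap_bound hg hg'
    apply stGE_of_dominates (B := max Bf Bg)
      (fun k hk => hBg k (le_trans (le_max_right _ _) hk))
      (fun k hk => hBf k (le_trans (le_max_left _ _) hk))
    intro m
    rw [psum_Lmap hf hf', psum_Lmap hg hg']
    have := hle m
    rw [← small_coe_toNat hf m, ← small_coe_toNat hg m, Nat.cast_le] at this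
    exact this
  · intro h n
    have := psum_le_of_stGE h n
    rw [psum_Lmap hf hf', psum_Lmap hg hg'] at this
    rw [← small_coe_toNat hf n, ← small_coe_toNat hg n]
    exact Nat.cast_le.2 this

section Large
variable {f : NNhat}

/-- Index of the first `⊤` value. -/
def mtop (hf : LargeMap f) : ℕ := Nat.find hf

lemma top_iff (hmono : Monotone f) (hf : LargeMap f) (i : ℕ) :
    f i = ⊤ ↔ mtop hf ≤ i := by
  constructor
  · intro h; exact Nat.find_le h
  · intro h
    have := hmono h
    rw [show f (mtop hf) = ⊤ from Nat.find_spec hf] at this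
    exact top_le_iff.1 this

lemma Afin (hmono : Monotone f) (hf : LargeMap f) (j : ℕ) :
    {i : ℕ | f i = (j : ℕ∞)}
      = ↑((Finset.range (mtop hf)).filter (fun i => f i = (j : ℕ∞))) := by
  ext i
  simp only [Set.mem_setOf_eq, Finset.coe_filter, Finset.mem_range, Set.mem_setOf_eq]
  constructor
  · intro h
    refine ⟨?_, h⟩
    by_contra hc
    push_neg at hc
    rw [(top_iff hmono hf i).2 hc] at h
    exact (ENat.coe_ne_top j) h.symm
  · exact fun h => h.2

lemma Gmap_card (hmono : Monotone f) (hf : LargeMap f) (j : ℕ) :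
    Gmap f j = ((Finset.range (mtop hf)).filter (fun i => f i = (j : ℕ∞))).card := by
  show Nat.card {i : ℕ // f i = (j : ℕ∞)} = _
  have h1 : Nat.card {i : ℕ // f i = (j : ℕ∞)}
      = Set.ncard {i : ℕ | f i = (j : ℕ∞)} := rfl
  rw [h1, Afin hmono hf j, Set.ncard_coe_finset]

lemma psum_Gmap (hmono : Monotone f) (hf : LargeMap f) (m : ℕ) :
    psum (Gmap f) m
      = ((Finset.range (mtop hf)).filter (fun i => f i ≤ (m : ℕ∞))).card := by
  unfold psum
  rw [Finset.sum_congr rfl (fun j _ => Gmap_card hmono hf j)]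
  rw [← Finset.card_biUnion]
  · congr 1
    ext i
    simp only [Finset.mem_biUnion, Finset.mem_range, Finset.mem_filter]
    constructor
    · rintro ⟨j, hj, him, hfij⟩
      refine ⟨him, ?_⟩
      rw [hfij]
      exact_mod_cast Nat.lt_succ_iff.1 hj
    · rintro ⟨him, hle⟩
      have hne : f i ≠ ⊤ := by
        intro h; rw [h] at hle
        exact absurd (top_le_iff.1 hle) (ENat.coe_ne_top m)
      refine ⟨(f i).toNat, ?_, him, (ENat.coe_toNat hne).symm⟩
      rw [Nat.lt_succ_iff, ← Nat.cast_le (α := ℕ∞), ENat.coe_toNat hne]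
      exact hle
  · intro x _ y _ hxy
    rw [Function.onFun, Finset.disjoint_left]
    intro i hix hiy
    rw [Finset.mem_filter] at hix hiy
    exact hxy (by exact_mod_cast hix.2.symm.trans hiy.2)

lemma Gmap_bound (hmono : Monotone f) (hf : LargeMap f) :
    ∀ j, (∑ i ∈ Finset.range (mtop hf), (f i).toNat) + 1 ≤ j → Gmap f j = 0 := by
  intro j hj
  rw [Gmap_card hmono hf j, Finset.card_eq_zero]
  rw [Finset.filter_eq_empty_iff]
  intro i hi heq
  have : (f i).toNat = j := by rw [heq]; simp
  have hle : (f i).toNat ≤ ∑ i ∈ Finset.range (mtop hf), (f i).toNat :=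
    Finset.single_le_sum (f := fun i => (f i).toNat) (fun _ _ => Nat.zero_le _) hi
  omega

end Large

lemma large_part (f g : NNhat) (hf' : Monotone f) (hg' : Monotone g)
    (hf : LargeMap f) (hg : LargeMap g) : f ≤ g ↔ stGE (Gmap f) (Gmap g) := by
  constructor
  · intro hle
    apply stGE_of_dominates
      (B := max ((∑ i ∈ Finset.range (mtop hf), (f i).toNat) + 1)
               ((∑ i ∈ Finset.range (mtop hg), (g i).toNat) + 1))
      (fun k hk => Gmap_bound hf' hf k (le_trans (le_max_left _ _) hk))
      (fun k hk => Gmap_bound hg' hg k (le_trans (le_max_right _ _) hk))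
    intro m
    rw [psum_Gmap hf' hf, psum_Gmap hg' hg]
    apply Finset.card_le_card
    intro i hi
    rw [Finset.mem_filter, Finset.mem_range] at hi
    obtain ⟨him, hgi⟩ := hi
    have hfle : f i ≤ (m : ℕ∞) := le_trans (hle i) hgi
    refine Finset.mem_filter.2 ⟨Finset.mem_range.2 ?_, hfle⟩
    by_contra hc
    push_neg at hc
    rw [(top_iff hf' hf i).2 hc] at hfle
    exact absurd (top_le_iff.1 hfle) (ENat.coe_ne_top m)
  · intro h i
    by_cases hgi : g i = ⊤
    · rw [hgi]; exact le_top
    set m := (g i).toNat with hm_def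
    have hm : (m : ℕ∞) = g i := ENat.coe_toNat hgi
    have hdom := psum_le_of_stGE h m
    rw [psum_Gmap hf' hf, psum_Gmap hg' hg] at hdom
    have hsub : Finset.range (i + 1)
        ⊆ (Finset.range (mtop hg)).filter (fun k => g k ≤ (m : ℕ∞)) := by
      intro k hk
      rw [Finset.mem_range, Nat.lt_succ_iff] at hk
      have hgk : g k ≤ (m : ℕ∞) := by rw [hm]; exact hg' hk
      refine Finset.mem_filter.2 ⟨Finset.mem_range.2 ?_, hgk⟩
      by_contra hc
      push_neg at hc
      rw [(top_iff hg' hg k).2 hc] at hgk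
      exact absurd (top_le_iff.1 hgk) (ENat.coe_ne_top m)
    have h1 : i + 1 ≤ ((Finset.range (mtop hg)).filter (fun k => g k ≤ (m : ℕ∞))).card := by
      calc i + 1 = (Finset.range (i+1)).card := by rw [Finset.card_range]
      _ ≤ _ := Finset.card_le_card hsub
    by_contra hc
    rw [not_le, ← hm] at hc
    have hsub2 : (Finset.range (mtop hf)).filter (fun k => f k ≤ (m : ℕ∞))
        ⊆ Finset.range i := by
      intro k hk
      rw [Finset.mem_filter] at hk
      rw [Finset.mem_range]
      by_contra hik
      push_neg at hik
      exact absurd (lt_of_le_of_lt (le_trans (hf' hik) hk.2) hc) (lt_irrefl _)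
    have h2 := Finset.card_le_card hsub2
    rw [Finset.card_range] at h2
    omega

/-- for large maps `f ≤ g ↔ Γf ≥_st Γg`; for small maps
`f ≤ g ↔ Λf ≤_st Λg`. -/
theorem stmt4 :
    (∀ f g : NNhat, Monotone f → Monotone g → LargeMap f → LargeMap g →
      (f ≤ g ↔ stGE (Gmap f) (Gmap g))) ∧
    (∀ f g : NNhat, Monotone f → Monotone g → SmallMap f → SmallMap g →
      (f ≤ g ↔ stGE (Lmap g) (Lmap f))) :=
  ⟨large_part, small_part⟩

end
end

section
/- The assignment ℐ ↦ Γ(ℐ^L) = { Γf : f ∈ ℐ, f large } is a one-to-one correspondence between the open poset ideals ℐ of Hom(ℕ,ℕ̂) and the strongly stable ideals of k[x_ℕ] (i.e. the sets of monomials upward closed under ≥_st). -/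
noncomputable section

noncomputable section StmtAux
open Classical

/-- Partial sums of an exponent vector: `Ssum u j = u 0 + ⋯ + u j`. -/
def Ssum (u : ℕ → ℕ) (j : ℕ) : ℕ := ∑ i ∈ Finset.range (j+1), u i

lemma Ssum_mono (u : ℕ → ℕ) : Monotone (Ssum u) := fun a b hab =>
  Finset.sum_le_sum_of_subset (Finset.range_subset_range.mpr (by omega))

lemma Ssum_add_xvar (w : ℕ → ℕ) (i j : ℕ) :
    Ssum (w + xvar i) j = Ssum w j + (if i ≤ j then 1 else 0) := by
  unfold Ssum xvar
  simp only [Pi.add_apply]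
  rw [Finset.sum_add_distrib, Finset.sum_ite_eq' (Finset.range (j+1)) i (fun _ => 1)]
  simp [Nat.lt_succ_iff]

lemma enat_le_of_forall {x y : ℕ∞} (h : ∀ j : ℕ, y ≤ (j:ℕ∞) → x ≤ (j:ℕ∞)) : x ≤ y := by
  induction y using ENat.recTopCoe with
  | top => exact le_top
  | coe j => exact h j le_rfl

/-- The canonical large monotone map attached to an exponent vector. -/
def fseqFun (u : ℕ → ℕ) : NNhat := fun n =>
  if h : ∃ m, n < Ssum u m then ((Nat.find h : ℕ) : ℕ∞) else ⊤

lemma fseq_le_iff (u : ℕ → ℕ) (n j : ℕ) : fseqFun u n ≤ (j:ℕ∞) ↔ n < Ssum u j := by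
  unfold fseqFun
  split_ifs with h
  · rw [Nat.cast_le]
    constructor
    · intro hle; exact lt_of_lt_of_le (Nat.find_spec h) (Ssum_mono u hle)
    · intro hj; exact Nat.find_min' h hj
  · push_neg at h
    simp only [top_le_iff]
    constructor
    · intro he; exact absurd he (ENat.coe_ne_top j)
    · intro hj; exact absurd hj (not_lt.mpr (h j))

lemma fseq_mono (u : ℕ → ℕ) : Monotone (fseqFun u) := by
  intro n n' hnn'
  apply enat_le_of_forall
  intro j hj
  rw [fseq_le_iff] at *
  exact lt_of_le_of_lt hnn' hj

lemma fseq_large {u : ℕ → ℕ} (hu : Mon u) : LargeMap (fseqFun u) := by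
  obtain ⟨N, hN⟩ := hu.bddAbove
  have hb : ∀ m, Ssum u m ≤ Ssum u N := by
    intro m
    rcases le_total m N with h | h
    · exact Ssum_mono u h
    · have : Ssum u N = Ssum u m := by
        apply Finset.sum_subset (Finset.range_subset_range.mpr (by omega))
        intro x _ hx
        rw [Finset.mem_range] at hx
        by_contra hx0
        exact absurd (hN (Function.mem_support.mpr hx0)) (by omega)
      omega
  refine ⟨Ssum u N, ?_⟩
  unfold fseqFun
  rw [dif_neg]
  push_neg
  intro m
  exact not_lt.mp (by have := hb m; omega)

lemma nat_card_ico (a b : ℕ) (P : ℕ → Prop) (hP : ∀ i, P i ↔ a ≤ i ∧ i < b) :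
    Nat.card {i : ℕ // P i} = b - a := by
  have h1 : Nat.card {i : ℕ // P i} = Nat.card (Set.Ico a b) :=
    Nat.card_congr (Equiv.subtypeEquivRight (fun i => by rw [hP i]; exact Iff.rfl))
  rw [h1, Nat.card_coe_set_eq, ← Finset.coe_Ico, Set.ncard_coe_finset, Nat.card_Ico]

lemma gmap_fseq (u : ℕ → ℕ) : Gmap (fseqFun u) = u := by
  funext j
  unfold Gmap
  cases j with
  | zero =>
    rw [nat_card_ico 0 (Ssum u 0) _ (fun i => ?_)]
    · simp [Ssum]
    · rw [show ((0:ℕ):ℕ∞) = 0 by norm_cast, ← nonpos_iff_eq_zero, ← Nat.cast_zero,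
        fseq_le_iff]
      omega
  | succ k =>
    rw [nat_card_ico (Ssum u k) (Ssum u (k+1)) _ (fun i => ?_)]
    · have : Ssum u (k+1) = Ssum u k + u (k+1) := Finset.sum_range_succ u (k+1)
      omega
    · constructor
      · intro he
        have h1 : fseqFun u i ≤ ((k+1:ℕ):ℕ∞) := le_of_eq he
        have h2 : ¬ fseqFun u i ≤ ((k:ℕ):ℕ∞) := by
          rw [he, Nat.cast_le]; omega
        rw [fseq_le_iff] at h1 h2
        omega
      · rintro ⟨h1, h2⟩
        have hle : fseqFun u i ≤ ((k+1:ℕ):ℕ∞) := (fseq_le_iff u i (k+1)).mpr h2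
        have hnle : ¬ fseqFun u i ≤ ((k:ℕ):ℕ∞) := by
          rw [fseq_le_iff]; omega
        lift fseqFun u i to ℕ using ne_top_of_le_ne_top (ENat.coe_ne_top _) hle with m hm
        rw [Nat.cast_le] at hle hnle
        rw [Nat.cast_inj]
        omega

lemma finset_dc (s : Finset ℕ) (h : ∀ a ∈ s, ∀ b, b ≤ a → b ∈ s) :
    s = Finset.range s.card := by
  have hsub : s ⊆ Finset.range s.card := by
    intro a ha
    rw [Finset.mem_range]
    have h1 : Finset.range (a+1) ⊆ s := by
      intro b hb
      rw [Finset.mem_range, Nat.lt_succ_iff] at hb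
      exact h a ha b hb
    have := Finset.card_le_card h1
    rw [Finset.card_range] at this
    omega
  exact Finset.eq_of_subset_of_card_le hsub (by rw [Finset.card_range])

lemma gmap_char {f : NNhat} (hm : Monotone f) (hl : LargeMap f) (n j : ℕ) :
    f n ≤ (j : ℕ∞) ↔ n < Ssum (Gmap f) j := by
  have hex : ∃ k, f k = ⊤ := hl
  set k := Nat.find hex with hk
  have hfk : f k = ⊤ := Nat.find_spec hex
  have htop : ∀ i, f i = ⊤ ↔ k ≤ i := by
    intro i
    constructor
    · intro h
      by_contra hlt
      push_neg at hlt
      exact Nat.find_min hex hlt h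
    · intro h
      exact top_le_iff.mp (hfk ▸ hm h)
  have hlt_of_le : ∀ (i m : ℕ), f i ≤ (m:ℕ∞) → i < k := by
    intro i m h
    by_contra hik
    push_neg at hik
    rw [(htop i).mpr hik, top_le_iff] at h
    exact ENat.coe_ne_top m h
  set F : ℕ → Finset ℕ := fun m => (Finset.range k).filter (fun i => f i ≤ (m:ℕ∞)) with hF
  have hmemF : ∀ m i, i ∈ F m ↔ f i ≤ (m:ℕ∞) := by
    intro m i
    simp only [hF, Finset.mem_filter, Finset.mem_range]
    exact ⟨fun h => h.2, fun h => ⟨hlt_of_le i m h, h⟩⟩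
  have hGm : ∀ m : ℕ, Gmap f m = ((Finset.range k).filter (fun i => f i = (m:ℕ∞))).card := by
    intro m
    have hset : {i : ℕ | f i = (m:ℕ∞)} =
        ↑((Finset.range k).filter (fun i => f i = (m:ℕ∞))) := by
      ext i
      simp only [Set.mem_setOf_eq, Finset.coe_filter, Finset.mem_range, Set.mem_setOf_eq]
      exact ⟨fun h => ⟨hlt_of_le i m (le_of_eq h), h⟩, fun h => h.2⟩
    show Nat.card {i : ℕ | f i = (m:ℕ∞)} = _
    rw [Nat.card_coe_set_eq, hset, Set.ncard_coe_finset]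
  have hcard : ∀ m, (F m).card = Ssum (Gmap f) m := by
    intro m
    have hbu : F m = (Finset.range (m+1)).biUnion
        (fun r => (Finset.range k).filter (fun i => f i = (r:ℕ∞))) := by
      ext i
      simp only [hmemF, Finset.mem_biUnion, Finset.mem_range, Finset.mem_filter]
      constructor
      · intro h
        have hik : i < k := hlt_of_le i m h
        have hnt : f i ≠ ⊤ := fun ht => by
          rw [(htop i) ] at ht; omega
        lift f i to ℕ using hnt with r hr
        rw [Nat.cast_le] at h
        exact ⟨r, by omega, hik, rfl⟩
      · rintro ⟨r, hr, hik, hfr⟩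
        rw [hfr, Nat.cast_le]
        omega
    rw [hbu, Finset.card_biUnion]
    · unfold Ssum
      apply Finset.sum_congr rfl
      intro r _
      exact (hGm r).symm
    · intro x _ y _ hxy
      simp only [Function.onFun]
      rw [Finset.disjoint_left]
      intro i hi hi'
      rw [Finset.mem_filter] at hi hi'
      exact hxy (Nat.cast_injective (hi.2.symm ▸ hi'.2 : ((x:ℕ∞)) = y))
  have hdc : F j = Finset.range ((F j).card) := by
    apply finset_dc
    intro a ha b hb
    rw [hmemF] at *
    exact le_trans (hm hb) ha
  rw [← hcard j]
  constructor
  · intro h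
    have : n ∈ F j := (hmemF j n).mpr h
    rw [hdc, Finset.mem_range] at this
    exact this
  · intro h
    have : n ∈ F j := by rw [hdc, Finset.mem_range]; exact h
    exact (hmemF j n).mp this

lemma eq_fseq {f : NNhat} (hm : Monotone f) (hl : LargeMap f) : f = fseqFun (Gmap f) := by
  funext n
  apply le_antisymm
  · apply enat_le_of_forall
    intro j hj
    rw [fseq_le_iff] at hj
    exact (gmap_char hm hl n j).mpr hj
  · apply enat_le_of_forall
    intro j hj
    rw [gmap_char hm hl] at hj
    exact (fseq_le_iff _ n j).mpr hj

lemma gmap_mon {f : NNhat} (hm : Monotone f) (hl : LargeMap f) : Mon (Gmap f) := by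
  obtain ⟨k, hk⟩ := hl
  apply Set.Finite.subset (Set.Finite.image (fun i => (f i).toNat) (Set.finite_Iio k))
  intro j hj
  rw [Function.mem_support] at hj
  have hne : Nonempty {i : ℕ // f i = (j:ℕ∞)} := by
    by_contra hempty
    rw [not_nonempty_iff] at hempty
    exact hj (by unfold Gmap; simp)
  obtain ⟨i, hi⟩ := hne
  have hik : i < k := by
    by_contra hik
    push_neg at hik
    rw [show f i = ⊤ from top_le_iff.mp (hk ▸ hm hik)] at hi
    exact ENat.coe_ne_top j hi.symm
  exact ⟨i, hik, by simp only [hi]; rfl⟩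

lemma exists_sub_xvar {u : ℕ → ℕ} {i : ℕ} (h : u i ≠ 0) : ∃ w, u = w + xvar i := by
  refine ⟨fun k => u k - xvar i k, funext fun k => ?_⟩
  simp only [Pi.add_apply, xvar]
  split_ifs with hk
  · subst hk; omega
  · omega

lemma ssum_le_of_stStep {a b : ℕ → ℕ} (h : stStep a b) (j : ℕ) : Ssum b j ≤ Ssum a j := by
  rcases h with ⟨i, i', w, hii', ha, hb⟩ | ⟨i, ha⟩
  · subst ha; subst hb
    rw [Ssum_add_xvar, Ssum_add_xvar]
    have : (if i' ≤ j then (1:ℕ) else 0) ≤ if i ≤ j then 1 else 0 := by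
      split_ifs with h1 h2 <;> omega
    omega
  · subst ha
    rw [Ssum_add_xvar]
    omega

lemma ssum_le_of_stGE {u v : ℕ → ℕ} (h : stGE u v) (j : ℕ) : Ssum v j ≤ Ssum u j := by
  induction h with
  | refl => exact le_rfl
  | tail _ hstep ih => exact le_trans (ssum_le_of_stStep hstep j) ih

lemma mon_of_stStep {a b : ℕ → ℕ} (h : stStep a b) (hb : Mon b) : Mon a := by
  rcases h with ⟨i, i', w, _, ha, hbb⟩ | ⟨i, ha⟩
  · subst ha; subst hbb
    apply Set.Finite.subset (Set.Finite.union hb (Set.finite_singleton i))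
    intro k hk
    rw [Function.mem_support] at hk
    rcases eq_or_ne k i with rfl | hne
    · exact Or.inr rfl
    · left
      rw [Function.mem_support, Pi.add_apply, xvar] at *
      simp only [if_neg hne] at hk ⊢
      omega
  · subst ha
    apply Set.Finite.subset (Set.Finite.union hb (Set.finite_singleton i))
    intro k hk
    rw [Function.mem_support] at hk
    rcases eq_or_ne k i with rfl | hne
    · exact Or.inr rfl
    · left
      rw [Function.mem_support]
      rw [Pi.add_apply, xvar] at hk
      simp only [if_neg hne] at hk
      omega

lemma mon_of_stGE {u v : ℕ → ℕ} (h : stGE u v) (hv : Mon v) : Mon u := by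
  induction h with
  | refl => exact hv
  | tail _ hstep ih => exact ih (mon_of_stStep hstep hv)

lemma stStep_add (x : ℕ → ℕ) {a b : ℕ → ℕ} (h : stStep a b) : stStep (a + x) (b + x) := by
  rcases h with ⟨i, i', w, hii', ha, hb⟩ | ⟨i, ha⟩
  · exact Or.inl ⟨i, i', w + x, hii', by rw [ha, add_right_comm], by rw [hb, add_right_comm]⟩
  · exact Or.inr ⟨i, by rw [ha, add_right_comm]⟩

lemma stGE_add (x : ℕ → ℕ) {u v : ℕ → ℕ} (h : stGE u v) : stGE (u + x) (v + x) := by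
  induction h with
  | refl => exact Relation.ReflTransGen.refl
  | tail _ hstep ih => exact Relation.ReflTransGen.tail ih (stStep_add x hstep)

lemma sum_add_xvar (s : Finset ℕ) (w : ℕ → ℕ) (i : ℕ) (hi : i ∈ s) :
    ∑ k ∈ s, (w + xvar i) k = (∑ k ∈ s, w k) + 1 := by
  simp only [Pi.add_apply, xvar]
  rw [Finset.sum_add_distrib, Finset.sum_ite_eq' s i (fun _ => 1), if_pos hi]

lemma stGE_aux (s : Finset ℕ) : ∀ n : ℕ, ∀ u v : ℕ → ℕ,
    (∀ k, u k ≠ 0 → k ∈ s) → (∀ k, v k ≠ 0 → k ∈ s) →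
    (∑ i ∈ s, u i) + (∑ i ∈ s, v i) = n → (∀ j, Ssum v j ≤ Ssum u j) → stGE u v := by
  intro n
  induction n using Nat.strong_induction_on with
  | _ n ih =>
    intro u v hus hvs hn hle
    by_cases hv0 : ∀ k, v k = 0
    · by_cases hu0 : ∀ k, u k = 0
      · have : u = v := funext fun k => by rw [hu0, hv0]
        exact this ▸ Relation.ReflTransGen.refl
      · push_neg at hu0
        obtain ⟨i, hi⟩ := hu0
        obtain ⟨w, hw⟩ := exists_sub_xvar hi
        have hws : ∀ k, w k ≠ 0 → k ∈ s := by
          intro k hk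
          apply hus k
          rw [hw, Pi.add_apply]
          omega
        have hsum : ∑ k ∈ s, u k = (∑ k ∈ s, w k) + 1 := by
          rw [hw]; exact sum_add_xvar s w i (hus i hi)
        have hrec : stGE w v := by
          apply ih (n-1) (by omega) w v hws hvs (by omega)
          intro j
          have := hle j
          have hv0' : Ssum v j = 0 := by
            unfold Ssum
            apply Finset.sum_eq_zero
            intro m _
            exact hv0 m
          omega
        exact Relation.ReflTransGen.head (Or.inr ⟨i, hw⟩) hrec
    · push_neg at hv0
      have hvex : ∃ k, v k ≠ 0 := hv0
      have huex : ∃ k, u k ≠ 0 := by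
        obtain ⟨k, hk⟩ := hvex
        by_contra hu0
        push_neg at hu0
        have h1 : Ssum v k ≤ Ssum u k := hle k
        have h2 : Ssum u k = 0 := Finset.sum_eq_zero (fun m _ => hu0 m)
        have h3 : v k ≤ Ssum v k :=
          Finset.single_le_sum (f := v) (fun m _ => Nat.zero_le _)
            (Finset.mem_range.mpr (by omega))
        omega
      set b1 := Nat.find hvex with hb1
      set a1 := Nat.find huex with ha1
      have hvb1 : v b1 ≠ 0 := Nat.find_spec hvex
      have hua1 : u a1 ≠ 0 := Nat.find_spec huex
      have ha1b1 : a1 ≤ b1 := by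
        have h1 : v b1 ≤ Ssum v b1 :=
          Finset.single_le_sum (f := v) (fun m _ => Nat.zero_le _)
            (Finset.mem_range.mpr (by omega))
        have h2 : Ssum v b1 ≤ Ssum u b1 := hle b1
        have h3 : ∃ i ≤ b1, u i ≠ 0 := by
          by_contra hcon
          push_neg at hcon
          have : Ssum u b1 = 0 := Finset.sum_eq_zero (fun m hm => by
            rw [Finset.mem_range] at hm
            exact hcon m (by omega))
          omega
        obtain ⟨i, hib, hine⟩ := h3
        exact le_trans (Nat.find_min' huex hine) hib
      obtain ⟨u', hu'⟩ := exists_sub_xvar hua1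
      obtain ⟨v', hv'⟩ := exists_sub_xvar hvb1
      have hu's : ∀ k, u' k ≠ 0 → k ∈ s := by
        intro k hk; apply hus k; rw [hu', Pi.add_apply]; omega
      have hv's : ∀ k, v' k ≠ 0 → k ∈ s := by
        intro k hk; apply hvs k; rw [hv', Pi.add_apply]; omega
      have hsumu : ∑ k ∈ s, u k = (∑ k ∈ s, u' k) + 1 := by
        rw [hu']; exact sum_add_xvar s u' a1 (hus a1 hua1)
      have hsumv : ∑ k ∈ s, v k = (∑ k ∈ s, v' k) + 1 := by
        rw [hv']; exact sum_add_xvar s v' b1 (hvs b1 hvb1)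
      have hle' : ∀ j, Ssum v' j ≤ Ssum u' j := by
        intro j
        have hj := hle j
        rw [hu', hv', Ssum_add_xvar, Ssum_add_xvar] at hj
        by_cases hbj : b1 ≤ j
        · rw [if_pos hbj, if_pos (le_trans ha1b1 hbj)] at hj
          omega
        · have hvj0 : Ssum v j = 0 := Finset.sum_eq_zero (fun m hm => by
            rw [Finset.mem_range] at hm
            by_contra hvm
            have := Nat.find_min' hvex hvm
            omega)
          have : Ssum v' j ≤ Ssum v j := by
            apply Finset.sum_le_sum
            intro m _
            rw [hv', Pi.add_apply]
            omega
          omega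
      have hrec : stGE u' v' :=
        ih (n-2) (by omega) u' v' hu's hv's (by omega) hle'
      have h1 : stGE u (v' + xvar a1) := by
        rw [hu']
        exact stGE_add (xvar a1) hrec
      have h2 : stStep (v' + xvar a1) v := by
        rw [hv']
        exact Or.inl ⟨a1, b1, v', ha1b1, rfl, rfl⟩
      exact Relation.ReflTransGen.tail h1 h2

lemma stGE_of_ssum_le {u v : ℕ → ℕ} (hu : Mon u) (hv : Mon v)
    (h : ∀ j, Ssum v j ≤ Ssum u j) : stGE u v := by
  classical
  refine stGE_aux (hu.toFinset ∪ hv.toFinset) _ u v ?_ ?_ rfl h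
  · intro k hk
    exact Finset.mem_union_left _ (hu.mem_toFinset.mpr hk)
  · intro k hk
    exact Finset.mem_union_right _ (hv.mem_toFinset.mpr hk)

/-- The generating family of the topology. -/
abbrev genSet : Set (Set HomNN) :=
  {S | ∃ a b : HomNN, SmallMap a.1 ∧ LargeMap b.1 ∧ S = {f : HomNN | a ≤ f ∧ f ≤ b}}

lemma homNN_le_iff {f g : HomNN} : f ≤ g ↔ ∀ n, f.1 n ≤ g.1 n := Iff.rfl

/-- The constant-`⊤` element. -/
def topH : HomNN := ⟨fun _ => ⊤, monotone_const⟩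

/-- The constant-`0` element. -/
def botH : HomNN := ⟨fun _ => 0, monotone_const⟩

lemma open_large {U : Set HomNN} (hU : IsOpen U) :
    ∀ f ∈ U, ∃ b : HomNN, LargeMap b.1 ∧ f ≤ b ∧ ∀ h, f ≤ h → h ≤ b → h ∈ U := by
  have hU' : TopologicalSpace.GenerateOpen genSet U := hU
  clear hU
  induction hU' with
  | basic S hS =>
    obtain ⟨a, b, _, hlb, rfl⟩ := hS
    intro f hf
    exact ⟨b, hlb, hf.2, fun h h1 h2 => ⟨le_trans hf.1 h1, h2⟩⟩
  | univ =>
    intro f _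
    exact ⟨topH, ⟨0, rfl⟩, fun n => le_top, fun _ _ _ => trivial⟩
  | inter S T hS hT ihS ihT =>
    intro f hf
    obtain ⟨b1, hb1l, hfb1, hb1⟩ := ihS f hf.1
    obtain ⟨b2, hb2l, hfb2, hb2⟩ := ihT f hf.2
    refine ⟨⟨fun n => min (b1.1 n) (b2.1 n), b1.2.min b2.2⟩, ?_, ?_, ?_⟩
    · obtain ⟨n1, hn1⟩ := hb1l
      obtain ⟨n2, hn2⟩ := hb2l
      refine ⟨max n1 n2, ?_⟩
      have h1 : b1.1 (max n1 n2) = ⊤ := top_le_iff.mp (hn1 ▸ b1.2 (le_max_left n1 n2))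
      have h2 : b2.1 (max n1 n2) = ⊤ := top_le_iff.mp (hn2 ▸ b2.2 (le_max_right n1 n2))
      simp [h1, h2]
    · exact fun n => le_min (hfb1 n) (hfb2 n)
    · intro h h1 h2
      exact ⟨hb1 h h1 (fun n => le_trans (h2 n) (min_le_left _ _)),
             hb2 h h1 (fun n => le_trans (h2 n) (min_le_right _ _))⟩
  | sUnion 𝒮 hmem ih =>
    rintro f ⟨S, hS, hfS⟩
    obtain ⟨b, hbl, hfb, hb⟩ := ih S hS f hfS
    exact ⟨b, hbl, hfb, fun h h1 h2 => ⟨S, hS, hb h h1 h2⟩⟩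

/-- The canonical element of `HomNN` attached to an exponent vector. -/
def FseqH (u : ℕ → ℕ) : HomNN := ⟨fseqFun u, fseq_mono u⟩

lemma lt_of_forall_lt {A B : ℕ} (h : ∀ n, n < A → n < B) : A ≤ B := by
  rcases Nat.eq_zero_or_pos A with h0 | h0
  · omega
  · have := h (A-1) (by omega)
    omega

lemma injOn_aux {I1 I2 : Set HomNN} (h1o : IsOpen I1) (h2l : IsLowerSet I2)
    (heq : GammaIdeal I1 ⊆ GammaIdeal I2) : I1 ⊆ I2 := by
  intro f hf
  obtain ⟨b, hbl, hfb, hball⟩ := open_large h1o f hf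
  have hbI1 : b ∈ I1 := hball b hfb le_rfl
  have : Gmap b.1 ∈ GammaIdeal I2 := heq ⟨b, hbI1, hbl, rfl⟩
  obtain ⟨g, hgI2, hgl, hgb⟩ := this
  have hge : g = b := by
    apply Subtype.ext
    rw [eq_fseq g.2 hgl, eq_fseq b.2 hbl, hgb]
  exact h2l hfb (hge ▸ hgI2)

theorem stmt5' :
    Set.BijOn GammaIdeal {ℐ : Set HomNN | IsOpen ℐ ∧ IsLowerSet ℐ}
      {I : Set (ℕ → ℕ) | IsSStableIdeal I} := by
  refine ⟨?_, ?_, ?_⟩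
  · -- MapsTo
    rintro ℐ ⟨hop, hlow⟩
    constructor
    · rintro u ⟨f, hfI, hfl, rfl⟩
      exact gmap_mon f.2 hfl
    · rintro u ⟨g, hgI, hgl, rfl⟩ w hw
      have hwMon : Mon w := mon_of_stGE hw (gmap_mon g.2 hgl)
      have hfg : FseqH w ≤ g := by
        intro n
        apply enat_le_of_forall
        intro j hj
        rw [gmap_char g.2 hgl] at hj
        have := ssum_le_of_stGE hw j
        exact (fseq_le_iff w n j).mpr (by omega)
      exact ⟨FseqH w, hlow hfg hgI, fseq_large hwMon, (gmap_fseq w).symm⟩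
  · -- InjOn
    rintro I1 ⟨h1o, h1l⟩ I2 ⟨h2o, h2l⟩ heq
    exact Set.Subset.antisymm (injOn_aux h1o h2l heq.le) (injOn_aux h2o h1l heq.ge)
  · -- SurjOn
    rintro I hI
    set ℐ : Set HomNN := {f | ∃ u ∈ I, f ≤ FseqH u} with hIdef
    have hlow : IsLowerSet ℐ := by
      rintro a b hba ⟨u, hu, hle⟩
      exact ⟨u, hu, le_trans hba hle⟩
    have hop : IsOpen ℐ := by
      have hrw : ℐ = ⋃ u ∈ I, {f : HomNN | botH ≤ f ∧ f ≤ FseqH u} := by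
        ext f
        simp only [hIdef, Set.mem_setOf_eq, Set.mem_iUnion]
        constructor
        · rintro ⟨u, hu, hle⟩
          exact ⟨u, hu, fun n => zero_le, hle⟩
        · rintro ⟨u, hu, _, hle⟩
          exact ⟨u, hu, hle⟩
      rw [hrw]
      apply isOpen_biUnion
      intro u hu
      exact TopologicalSpace.GenerateOpen.basic _
        ⟨botH, FseqH u, ⟨0, fun n => le_rfl⟩, fseq_large (hI.1 hu), rfl⟩
    refine ⟨ℐ, ⟨hop, hlow⟩, ?_⟩
    ext u
    constructor
    · rintro ⟨f, ⟨w, hwI, hfw⟩, hfl, rfl⟩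
      apply hI.2 w hwI
      apply stGE_of_ssum_le (gmap_mon f.2 hfl) (hI.1 hwI)
      intro j
      apply lt_of_forall_lt
      intro n hn
      have h1 : fseqFun w n ≤ (j:ℕ∞) := (fseq_le_iff w n j).mpr hn
      have h2 : f.1 n ≤ (j:ℕ∞) := le_trans (hfw n) h1
      exact (gmap_char f.2 hfl n j).mp h2
    · intro hu
      exact ⟨FseqH u, ⟨u, hu, le_rfl⟩, fseq_large (hI.1 hu), (gmap_fseq u).symm⟩

end StmtAux

/-- `ℐ ↦ Γ(ℐ^L)` is a one-to-one correspondence between open poset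
ideals of `Hom(ℕ,ℕ̂)` and strongly stable ideals of `k[x_ℕ]`. -/
theorem stmt5 :
    Set.BijOn GammaIdeal {ℐ : Set HomNN | IsOpen ℐ ∧ IsLowerSet ℐ}
      {I : Set (ℕ → ℕ) | IsSStableIdeal I} := by
  exact stmt5'

end
end

section
/- An open poset ideal ℐ of Hom(ℕ,ℕ̂) is regular open (equals the interior of its closure) if and only if ℐ has a bounding function, i.e. a monotone map F : ℕ → ℕ with finite values such that every f ∈ ℐ with f(p) > F(p) for some p is dominated by some g ∈ ℐ (g ≥ f) with g(p) = ∞. -/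
noncomputable section
namespace Stmt6Aux

def gen : Set (Set HomNN) :=
  {S | ∃ a b : HomNN, SmallMap a.1 ∧ LargeMap b.1 ∧ S = {f : HomNN | a ≤ f ∧ f ≤ b}}

def capN (f : HomNN) (N : ℕ) : HomNN :=
  ⟨fun n => min (f.1 n) (N : ℕ∞), fun a b h => min_le_min (f.2 h) le_rfl⟩

def pushK (f : HomNN) (k : ℕ) : HomNN :=
  ⟨fun n => if n < k then f.1 n else ⊤, by
    intro a b hab
    dsimp only
    by_cases hb : b < k
    · rw [if_pos (lt_of_le_of_lt hab hb), if_pos hb]; exact f.2 hab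
    · rw [if_neg hb]; exact le_top⟩

lemma capN_le (f : HomNN) (N : ℕ) : capN f N ≤ f := fun n => min_le_left _ _

lemma le_pushK (f : HomNN) (k : ℕ) : f ≤ pushK f k := by
  intro n
  show f.1 n ≤ if n < k then f.1 n else ⊤
  split <;> simp

lemma smallMap_capN (f : HomNN) (N : ℕ) : SmallMap (capN f N).1 := ⟨N, fun n => min_le_right _ _⟩
lemma largeMap_pushK (f : HomNN) (k : ℕ) : LargeMap (pushK f k).1 := ⟨k, if_neg (lt_irrefl k)⟩

lemma pushK_anti (f : HomNN) {k k' : ℕ} (h : k ≤ k') : pushK f k' ≤ pushK f k := by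
  intro n
  show (if n < k' then f.1 n else ⊤) ≤ if n < k then f.1 n else ⊤
  by_cases h1 : n < k
  · rw [if_pos h1, if_pos (lt_of_lt_of_le h1 h)]
  · rw [if_neg h1]; exact le_top

lemma capN_mono (f : HomNN) {N N' : ℕ} (h : N ≤ N') : capN f N ≤ capN f N' :=
  fun n => min_le_min le_rfl (Nat.cast_le.mpr h)

lemma isOpen_interval (a b : HomNN) (ha : SmallMap a.1) (hb : LargeMap b.1) :
    IsOpen {f : HomNN | a ≤ f ∧ f ≤ b} :=
  TopologicalSpace.GenerateOpen.basic _ ⟨a, b, ha, hb, rfl⟩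

lemma exists_interval {V : Set HomNN} (hV : IsOpen V) :
    ∀ f ∈ V, ∃ N k : ℕ, ∀ g : HomNN, capN f N ≤ g → g ≤ pushK f k → g ∈ V := by
  have hV' : TopologicalSpace.GenerateOpen gen V := hV
  clear hV
  induction hV' with
  | basic S hS =>
      obtain ⟨a, b, ⟨N, hN⟩, ⟨k, hk⟩, rfl⟩ := hS
      intro f hf
      refine ⟨N, k, fun g hg1 hg2 => ⟨fun n => ?_, fun n => ?_⟩⟩
      · exact le_trans (le_min (hf.1 n) (hN n)) (hg1 n)
      · refine le_trans (hg2 n) ?_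
        show (if n < k then f.1 n else ⊤) ≤ b.1 n
        by_cases h1 : n < k
        · rw [if_pos h1]; exact hf.2 n
        · rw [if_neg h1]
          have h2 : b.1 k ≤ b.1 n := b.2 (le_of_not_gt h1)
          rw [hk] at h2
          exact h2
  | univ => exact fun f _ => ⟨0, 0, fun g _ _ => trivial⟩
  | inter S T hS hT ihS ihT =>
      intro f hf
      obtain ⟨N1, k1, h1⟩ := ihS f hf.1
      obtain ⟨N2, k2, h2⟩ := ihT f hf.2
      refine ⟨max N1 N2, max k1 k2, fun g hg1 hg2 => ⟨?_, ?_⟩⟩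
      · exact h1 g (le_trans (capN_mono f (le_max_left _ _)) hg1)
          (le_trans hg2 (pushK_anti f (le_max_left _ _)))
      · exact h2 g (le_trans (capN_mono f (le_max_right _ _)) hg1)
          (le_trans hg2 (pushK_anti f (le_max_right _ _)))
  | sUnion 𝒮 hs ih =>
      rintro f ⟨S, hS, hfS⟩
      obtain ⟨N, k, h⟩ := ih S hS f hfS
      exact ⟨N, k, fun g hg1 hg2 => ⟨S, hS, h g hg1 hg2⟩⟩

def botF : HomNN := ⟨fun _ => 0, monotone_const⟩
lemma small_botF : SmallMap botF.1 := ⟨0, fun n => by simp [botF]⟩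
lemma botF_le (f : HomNN) : botF ≤ f := fun n => zero_le

def minF (f g : HomNN) : HomNN :=
  ⟨fun n => min (f.1 n) (g.1 n), fun a b h => min_le_min (f.2 h) (g.2 h)⟩

lemma exists_coe_le {a : ℕ → ℕ∞} {c : ℕ∞} (hc : c ≠ ⊤) (h : c ≤ ⨆ t, a t) : ∃ t, c ≤ a t := by
  by_contra hcon
  push_neg at hcon
  obtain ⟨m, rfl⟩ := WithTop.ne_top_iff_exists.mp hc
  have hm : m ≠ 0 := by
    rintro rfl
    exact absurd (hcon 0) (fun h => not_lt_bot (lt_of_lt_of_eq h rfl))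
  have hle : ∀ t, a t ≤ ((m - 1 : ℕ) : ℕ∞) := by
    intro t
    have h1 := hcon t
    obtain ⟨l, hl⟩ := WithTop.ne_top_iff_exists.mp (ne_top_of_lt h1)
    rw [← hl] at h1 ⊢
    have h2 : l < m := Nat.cast_lt.mp h1
    exact Nat.cast_le.mpr (by omega)
  have h3 : ((m : ℕ) : ℕ∞) ≤ ((m - 1 : ℕ) : ℕ∞) := le_trans h (iSup_le hle)
  have h4 : m ≤ m - 1 := Nat.cast_le.mp h3
  omega

lemma exists_mono_subseq (a : ℕ → ℕ∞) :
    ∃ φ : ℕ → ℕ, StrictMono φ ∧ Monotone (fun t => a (φ t)) := by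
  have hp : (Set.univ : Set ℕ∞).IsPWO := (Set.isWF_univ_iff.mpr ⟨wellFounded_lt⟩).isPWO
  obtain ⟨g, hg⟩ := hp.exists_monotone_subseq (f := a) (fun n => trivial)
  exact ⟨g, g.strictMono, hg⟩

lemma exists_mono_subseq_forall (a : ℕ → ℕ → ℕ∞) (p : ℕ) :
    ∃ φ : ℕ → ℕ, StrictMono φ ∧ ∀ n < p, Monotone (fun t => a (φ t) n) := by
  induction p with
  | zero => exact ⟨id, strictMono_id, fun n hn => absurd hn (Nat.not_lt_zero n)⟩
  | succ p ih =>
      obtain ⟨φ, hφ, hmono⟩ := ih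
      obtain ⟨ψ, hψ, hψmono⟩ := exists_mono_subseq (fun t => a (φ t) p)
      refine ⟨φ ∘ ψ, hφ.comp hψ, fun n hn => ?_⟩
      rcases Nat.lt_succ_iff_lt_or_eq.mp hn with h | rfl
      · exact (hmono n h).comp hψ.monotone
      · exact hψmono

end Stmt6Aux
end

noncomputable section
open Stmt6Aux

/-- an open poset ideal of `Hom(ℕ,ℕ̂)` is regular open iff it has a
bounding function. -/
theorem stmt6 (ℐ : Set HomNN) (hopen : IsOpen ℐ) (hlower : IsLowerSet ℐ) :
    ℐ = interior (closure ℐ) ↔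
      ∃ F : ℕ → ℕ, Monotone F ∧
        ∀ f ∈ ℐ, ∀ p : ℕ, (F p : ℕ∞) < f.1 p →
          ∃ g ∈ ℐ, f ≤ g ∧ g.1 p = ⊤ := by
  classical
  constructor
  · -- regular open → bounding function
    intro hreg
    have key : ∀ p : ℕ, ∃ M : ℕ, ∀ f ∈ ℐ, (M : ℕ∞) < f.1 p →
        ∃ g ∈ ℐ, f ≤ g ∧ g.1 p = ⊤ := by
      intro p
      by_contra hcon
      push_neg at hcon
      choose f hmem hbig hnoext using hcon
      obtain ⟨φ, hφ, hmono⟩ := exists_mono_subseq_forall (fun j n => (f j).1 n) p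
      have hLmono : Monotone (fun n => if n < p then ⨆ t, (f (φ t)).1 n else (⊤ : ℕ∞)) := by
        intro a b hab
        dsimp only
        by_cases hb : b < p
        · rw [if_pos (lt_of_le_of_lt hab hb), if_pos hb]
          exact iSup_mono (fun t => (f (φ t)).2 hab)
        · rw [if_neg hb]; exact le_top
      set L : HomNN := ⟨_, hLmono⟩ with hLdef
      have hLtop : L.1 p = ⊤ := if_neg (lt_irrefl p)
      have hLge : ∀ t, f (φ t) ≤ L := by
        intro t n
        show (f (φ t)).1 n ≤ if n < p then ⨆ s, (f (φ s)).1 n else ⊤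
        by_cases hn : n < p
        · rw [if_pos hn]; exact le_iSup (fun s => (f (φ s)).1 n) t
        · rw [if_neg hn]; exact le_top
      have hLnotin : L ∉ ℐ := fun hL => hnoext (φ 0) L hL (hLge 0) hLtop
      have hUsub : {g : HomNN | botF ≤ g ∧ g ≤ L} ⊆ closure ℐ := by
        rintro h ⟨-, hhL⟩
        rw [mem_closure_iff]
        intro O hO hhO
        obtain ⟨N, k, hNk⟩ := exists_interval hO h hhO
        have hsel : ∀ n : ℕ, ∃ t : ℕ, n < p → min (L.1 n) (N : ℕ∞) ≤ (f (φ t)).1 n := by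
          intro n
          by_cases hn : n < p
          · have h1 : min (L.1 n) (N : ℕ∞) ≤ ⨆ t, (f (φ t)).1 n := by
              have h2 : L.1 n = ⨆ t, (f (φ t)).1 n := if_pos hn
              rw [← h2]; exact min_le_left _ _
            have h3 : min (L.1 n) (N : ℕ∞) ≠ ⊤ :=
              ne_top_of_le_ne_top (WithTop.coe_ne_top) (min_le_right _ _)
            obtain ⟨t, ht⟩ := exists_coe_le h3 h1
            exact ⟨t, fun _ => ht⟩
          · exact ⟨0, fun hc => absurd hc hn⟩
        choose sel hsel using hsel
        set T := max N ((Finset.range p).sup sel) with hT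
        have hTp : (N : ℕ∞) < (f (φ T)).1 p := by
          have h1 : (N : ℕ∞) ≤ (T : ℕ∞) := Nat.cast_le.mpr (le_max_left _ _)
          have h2 : (T : ℕ∞) ≤ (φ T : ℕ∞) := Nat.cast_le.mpr hφ.le_apply
          exact lt_of_le_of_lt (le_trans h1 h2) (hbig (φ T))
        refine ⟨minF (f (φ T)) h, hNk _ ?_ ?_, hlower (fun n => min_le_left _ _) (hmem (φ T))⟩
        · intro n
          show min (h.1 n) (N : ℕ∞) ≤ min ((f (φ T)).1 n) (h.1 n)
          refine le_min ?_ (min_le_left _ _)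
          by_cases hn : n < p
          · have h2 : min (h.1 n) (N : ℕ∞) ≤ min (L.1 n) (N : ℕ∞) := min_le_min (hhL n) le_rfl
            have h4 : (f (φ (sel n))).1 n ≤ (f (φ T)).1 n :=
              hmono n hn (le_trans (Finset.le_sup (Finset.mem_range.mpr hn)) (le_max_right _ _))
            exact le_trans h2 (le_trans (hsel n hn) h4)
          · have h5 : (f (φ T)).1 p ≤ (f (φ T)).1 n := (f (φ T)).2 (le_of_not_gt hn)
            exact le_trans (min_le_right _ _) (le_trans hTp.le h5)
        · exact le_trans (fun n => min_le_right ((f (φ T)).1 n) (h.1 n)) (le_pushK h k)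
      have hLin : L ∈ ℐ := by
        rw [hreg]
        exact mem_interior.mpr ⟨_, hUsub, isOpen_interval botF L small_botF ⟨p, hLtop⟩,
          botF_le L, le_refl L⟩
      exact hLnotin hLin
    choose M hM using key
    refine ⟨fun p => (Finset.range (p + 1)).sup M,
      fun a b hab => Finset.sup_mono (Finset.range_subset_range.mpr (by omega)), ?_⟩
    intro f hf p hp
    have h1 : (M p : ℕ∞) ≤ (((Finset.range (p + 1)).sup M : ℕ) : ℕ∞) :=
      Nat.cast_le.mpr (Finset.le_sup (Finset.mem_range.mpr (Nat.lt_succ_self p)))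
    exact hM p f hf (lt_of_le_of_lt h1 hp)
  · -- bounding function → regular open
    rintro ⟨F, hFmono, hF⟩
    apply Set.Subset.antisymm
    · exact interior_maximal subset_closure hopen
    · intro f hf
      obtain ⟨N, k, hNk⟩ := exists_interval isOpen_interior f hf
      have hj : ∃ j, j ≤ k ∧ (∀ n < j, f.1 n ≠ ⊤) ∧ (∀ n, j ≤ n → n < k → f.1 n = ⊤) := by
        by_cases h : ∃ n, n < k ∧ f.1 n = ⊤
        · refine ⟨Nat.find h, le_of_lt (lt_of_le_of_lt (Nat.find_min' h ⟨(Classical.choose_spec h).1,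
            (Classical.choose_spec h).2⟩) (Classical.choose_spec h).1), ?_, ?_⟩
          · intro n hn htop
            have h1 : n < k :=
              lt_trans (lt_of_lt_of_le hn (Nat.find_min' h ⟨(Classical.choose_spec h).1,
                (Classical.choose_spec h).2⟩)) (Classical.choose_spec h).1
            exact Nat.find_min h hn ⟨h1, htop⟩
          · intro n hjn _
            have h2 : f.1 (Nat.find h) ≤ f.1 n := f.2 hjn
            rw [(Nat.find_spec h).2] at h2
            exact top_le_iff.mp h2
        · push_neg at h
          exact ⟨k, le_rfl, fun n hn => h n hn, fun n h1 h2 => absurd h2 (by omega)⟩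
      obtain ⟨j, hjk, hjfin, hjtop⟩ := hj
      have hmem1 : pushK f j ∈ closure ℐ := by
        refine interior_subset (hNk (pushK f j) (fun n => ?_) (fun n => ?_))
        · show min (f.1 n) (N : ℕ∞) ≤ if n < j then f.1 n else ⊤
          by_cases hn : n < j
          · rw [if_pos hn]; exact min_le_left _ _
          · rw [if_neg hn]; exact le_top
        · show (if n < j then f.1 n else ⊤) ≤ if n < k then f.1 n else ⊤
          by_cases hn : n < j
          · rw [if_pos hn, if_pos (lt_of_lt_of_le hn hjk)]
          · rw [if_neg hn]
            by_cases hn2 : n < k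
            · rw [if_pos hn2, hjtop n (le_of_not_gt hn) hn2]
            · rw [if_neg hn2]
      set M := max (F j) ((Finset.range j).sup (fun n => (f.1 n).toNat)) + 1 with hMdef
      have hO : IsOpen {g : HomNN | capN (pushK f j) M ≤ g ∧ g ≤ pushK f j} :=
        isOpen_interval _ _ (smallMap_capN _ _) (largeMap_pushK f j)
      obtain ⟨g, ⟨hg1, hg2⟩, hgI⟩ :=
        (mem_closure_iff.mp hmem1) _ hO ⟨capN_le _ _, le_refl _⟩
      have hgj : (F j : ℕ∞) < g.1 j := by
        have h1 := hg1 j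
        have h2 : (capN (pushK f j) M).1 j = (M : ℕ∞) := by
          show min (if j < j then f.1 j else ⊤) (M : ℕ∞) = (M : ℕ∞)
          rw [if_neg (lt_irrefl j)]
          simp
        rw [h2] at h1
        exact lt_of_lt_of_le (Nat.cast_lt.mpr (by omega)) h1
      obtain ⟨g', hg'I, hgg', hg'top⟩ := hF g hgI j hgj
      have hfg' : f ≤ g' := by
        intro n
        by_cases hn : n < j
        · have h2 : f.1 n ≠ ⊤ := hjfin n hn
          have h3 : (f.1 n).toNat ≤ M := by
            have h7 : (f.1 n).toNat ≤ (Finset.range j).sup (fun n => (f.1 n).toNat) :=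
              Finset.le_sup (f := fun n => (f.1 n).toNat) (Finset.mem_range.mpr hn)
            omega
          have h1 : f.1 n ≤ (M : ℕ∞) := by
            rw [← ENat.coe_toNat h2]
            exact Nat.cast_le.mpr h3
          have h4 : (capN (pushK f j) M).1 n = min (f.1 n) (M : ℕ∞) := by
            show min (if n < j then f.1 n else ⊤) (M : ℕ∞) = _
            rw [if_pos hn]
          have h5 : f.1 n ≤ g.1 n := by
            have h6 := hg1 n
            rw [h4, min_eq_left h1] at h6
            exact h6
          exact le_trans h5 (hgg' n)
        · have h6 : g'.1 j ≤ g'.1 n := g'.2 (le_of_not_gt hn)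
          rw [hg'top] at h6
          exact le_trans le_top h6
      exact hlower hfg' hg'I

end
end
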